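/- Let X be a subset of the E_8 root system containing exactly one root from each antipodal pair, and suppose Σ_{x ∈ X} x = 0. Then there exists a homogeneous harmonic polynomial f of degree 3 on ℝ^8 with Σ_{x ∈ X} f(x) ≠ 0; i.e., no half of E_8 summing to zero is a spherical design of harmonic index {3}. -/
import Mathlib

open MvPolynomial

/-- The root system `E_8` in `ℝ^8` (240 vectors of squared norm 2). -/
def rootsE8 : Set (Fin 8 → ℝ) :=
  {v | ∃ i j : Fin 8, i < j ∧
    (v = Pi.single i 1 + Pi.single j (1 : ℝ) ∨
     v = Pi.single i 1 - Pi.single j (1 : ℝ) ∨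
     v = -(Pi.single i 1 + Pi.single j (1 : ℝ)) ∨
     v = -(Pi.single i 1 - Pi.single j (1 : ℝ)))} ∪
  {v | ∃ c : Fin 8 → ℝ, (∀ i, c i = 1 ∨ c i = -1) ∧ (∏ i, c i) = 1 ∧
    v = (1 / 2 : ℝ) • c}

noncomputable def fE1 : MvPolynomial (Fin 8) ℝ :=
  15 * (X 0 * X 0 * X 1) + 5 * (X 1 * X 1 * X 1) - 3 * (∑ k, X k * X k) * X 1

noncomputable def fE2 : MvPolynomial (Fin 8) ℝ :=
  15 * (X 1 * X 1 * X 0) + 5 * (X 0 * X 0 * X 0) - 3 * (∑ k, X k * X k) * X 0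

lemma pderiv_ofNat' (i : Fin 8) (n : ℕ) [n.AtLeastTwo] :
    pderiv i (no_index (OfNat.ofNat n) : MvPolynomial (Fin 8) ℝ) = 0 := by
  rw [← map_ofNat (C : ℝ →+* MvPolynomial (Fin 8) ℝ) n, pderiv_C]

set_option maxHeartbeats 1000000 in
lemma harm_fE1 : (∑ i, MvPolynomial.pderiv i (MvPolynomial.pderiv i fE1)) = 0 := by
  simp only [fE1, Fin.sum_univ_eight]
  simp [pderiv_mul, pderiv_X, Pi.single_apply, pderiv_ofNat']
  ring

set_option maxHeartbeats 1000000 in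
lemma harm_fE2 : (∑ i, MvPolynomial.pderiv i (MvPolynomial.pderiv i fE2)) = 0 := by
  simp only [fE2, Fin.sum_univ_eight]
  simp [pderiv_mul, pderiv_X, Pi.single_apply, pderiv_ofNat']
  ring

lemma ofNat_eq_C (n : ℕ) [n.AtLeastTwo] :
    (no_index (OfNat.ofNat n) : MvPolynomial (Fin 8) ℝ) = C (OfNat.ofNat n) := by
  rw [map_ofNat]

lemma hom_aux (a b c : Fin 8) (r : ℝ)
    (q : MvPolynomial (Fin 8) ℝ) (hq : q.IsHomogeneous 2) :
    ((C r : MvPolynomial (Fin 8) ℝ) * (X a * X b * X c)).IsHomogeneous 3 ∧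
      ((C r : MvPolynomial (Fin 8) ℝ) * q * X c).IsHomogeneous 3 := by
  constructor
  · exact ((((isHomogeneous_X ℝ a).mul (isHomogeneous_X ℝ b)).mul
      (isHomogeneous_X ℝ c)).C_mul _ : _)
  · rw [mul_assoc]
    exact ((hq.mul (isHomogeneous_X ℝ c)).C_mul _ : _)

lemma hom_sum_sq : (∑ k : Fin 8, (X k * X k : MvPolynomial (Fin 8) ℝ)).IsHomogeneous 2 :=
  IsHomogeneous.sum _ _ _ fun k _ => (isHomogeneous_X ℝ k).mul (isHomogeneous_X ℝ k)

lemma hom_fE1 : fE1.IsHomogeneous 3 := by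
  unfold fE1
  rw [ofNat_eq_C 15, ofNat_eq_C 5, ofNat_eq_C 3]
  exact (((hom_aux 0 0 1 15 _ hom_sum_sq).1.add (hom_aux 1 1 1 5 _ hom_sum_sq).1)).sub
    (hom_aux 0 0 1 3 _ hom_sum_sq).2

lemma hom_fE2 : fE2.IsHomogeneous 3 := by
  unfold fE2
  rw [ofNat_eq_C 15, ofNat_eq_C 5, ofNat_eq_C 3]
  exact (((hom_aux 1 1 0 15 _ hom_sum_sq).1.add (hom_aux 0 0 0 5 _ hom_sum_sq).1)).sub
    (hom_aux 1 1 0 3 _ hom_sum_sq).2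

/-- squared norm of any root is 2 -/
lemma sum_single_sq (i : Fin 8) :
    ∑ k : Fin 8, (Pi.single i 1 : Fin 8 → ℝ) k * (Pi.single i 1 : Fin 8 → ℝ) k = (1:ℝ) := by
  rw [Finset.sum_eq_single i]
  · simp
  · intro b _ hb; rw [Pi.single_eq_of_ne hb]; ring
  · simp

lemma sum_single_cross (i j : Fin 8) (h : i ≠ j) :
    ∑ k : Fin 8, (Pi.single i 1 : Fin 8 → ℝ) k * (Pi.single j 1 : Fin 8 → ℝ) k = (0:ℝ) := by
  apply Finset.sum_eq_zero
  intro k _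
  rcases eq_or_ne k i with rfl | hk
  · rw [Pi.single_eq_of_ne h]; ring
  · rw [Pi.single_eq_of_ne hk]; ring

lemma sos (v : Fin 8 → ℝ) (hv : v ∈ rootsE8) : ∑ k : Fin 8, v k * v k = 2 := by
  rcases hv with ⟨i, j, hij, hf⟩ | ⟨c, hc, -, rfl⟩
  · have hne : i ≠ j := hij.ne
    have key : ∀ t : ℝ, t * t = 1 →
        ∑ k : Fin 8, ((Pi.single i 1 : Fin 8 → ℝ) k + t * (Pi.single j 1 : Fin 8 → ℝ) k) *
          ((Pi.single i 1 : Fin 8 → ℝ) k + t * (Pi.single j 1 : Fin 8 → ℝ) k) = (2:ℝ) := by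
      intro t ht
      have e : ∀ k, ((Pi.single i 1 : Fin 8 → ℝ) k + t * (Pi.single j 1 : Fin 8 → ℝ) k) *
          ((Pi.single i 1 : Fin 8 → ℝ) k + t * (Pi.single j 1 : Fin 8 → ℝ) k) =
          (Pi.single i 1 : Fin 8 → ℝ) k * (Pi.single i 1 : Fin 8 → ℝ) k
          + (t*t) * ((Pi.single j 1 : Fin 8 → ℝ) k * (Pi.single j 1 : Fin 8 → ℝ) k)
          + (2*t) * ((Pi.single i 1 : Fin 8 → ℝ) k * (Pi.single j 1 : Fin 8 → ℝ) k) := fun k => by ring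
      rw [Finset.sum_congr rfl fun k _ => e k]
      rw [Finset.sum_add_distrib, Finset.sum_add_distrib, ← Finset.mul_sum, ← Finset.mul_sum,
        sum_single_sq, sum_single_sq, sum_single_cross i j hne, ht]
      ring
    -- reduce to squares
    rcases hf with rfl | rfl | rfl | rfl
    · simpa using key 1 (by norm_num)
    · have := key (-1) (by norm_num)
      rw [← this]
      apply Finset.sum_congr rfl
      intro k _
      simp [sub_eq_add_neg]
      try ring
    · have := key 1 (by norm_num)
      rw [← this]
      apply Finset.sum_congr rfl
      intro k _
      simp
      try ring
    · have := key (-1) (by norm_num)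
      rw [← this]
      apply Finset.sum_congr rfl
      intro k _
      simp [sub_eq_add_neg]
      try ring
  · have e : ∀ k : Fin 8, ((1/2:ℝ) • c) k * ((1/2:ℝ) • c) k = 1/4 := by
      intro k
      rcases hc k with h | h <;> simp [h] <;> norm_num
    rw [Finset.sum_congr rfl fun k _ => e k, Finset.sum_const]
    norm_num

noncomputable def rr1 : Fin 8 → ℝ := Pi.single 0 1 + Pi.single 1 (1 : ℝ)
noncomputable def rr2 : Fin 8 → ℝ := Pi.single 0 1 - Pi.single 1 (1 : ℝ)

lemma ne01 : (0 : Fin 8) ≠ 1 := by decide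
lemma ne10 : (1 : Fin 8) ≠ 0 := by decide

lemma rr1_0 : rr1 0 = 1 := by
  rw [rr1, Pi.add_apply, Pi.single_eq_same, Pi.single_eq_of_ne ne01]; norm_num
lemma rr1_1 : rr1 1 = 1 := by
  rw [rr1, Pi.add_apply, Pi.single_eq_same, Pi.single_eq_of_ne ne10]; norm_num
lemma rr2_0 : rr2 0 = 1 := by
  rw [rr2, Pi.sub_apply, Pi.single_eq_same, Pi.single_eq_of_ne ne01]; norm_num
lemma rr2_1 : rr2 1 = -1 := by
  rw [rr2, Pi.sub_apply, Pi.single_eq_same, Pi.single_eq_of_ne ne10]; norm_num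

lemma rr1_mem : rr1 ∈ rootsE8 := Or.inl ⟨0, 1, by decide, Or.inl rfl⟩
lemma rr2_mem : rr2 ∈ rootsE8 := Or.inl ⟨0, 1, by decide, Or.inr (Or.inl rfl)⟩
lemma nrr1_mem : -rr1 ∈ rootsE8 := Or.inl ⟨0, 1, by decide, Or.inr (Or.inr (Or.inl rfl))⟩
lemma nrr2_mem : -rr2 ∈ rootsE8 := Or.inl ⟨0, 1, by decide, Or.inr (Or.inr (Or.inr rfl))⟩

lemma rr_ne_1 : rr1 ≠ rr2 := fun h => by
  have := congrFun h 1; rw [rr1_1, rr2_1] at this; norm_num at this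
lemma rr_ne_2 : rr1 ≠ -rr2 := fun h => by
  have := congrFun h 0; rw [rr1_0, Pi.neg_apply, rr2_0] at this; norm_num at this
lemma rr_ne_3 : -rr1 ≠ rr2 := fun h => by
  have := congrFun h 0; rw [Pi.neg_apply, rr1_0, rr2_0] at this; norm_num at this
lemma rr_ne_4 : -rr1 ≠ -rr2 := fun h => by
  have := congrFun h 1; rw [Pi.neg_apply, Pi.neg_apply, rr1_1, rr2_1] at this; norm_num at this

lemma eval_fE1 (v : Fin 8 → ℝ) : eval v fE1 =
    15 * (v 0 * v 0 * v 1) + 5 * (v 1 * v 1 * v 1)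
      - 3 * (∑ k : Fin 8, v k * v k) * v 1 := by
  simp [fE1]

lemma eval_fE2 (v : Fin 8 → ℝ) : eval v fE2 =
    15 * (v 1 * v 1 * v 0) + 5 * (v 0 * v 0 * v 0)
      - 3 * (∑ k : Fin 8, v k * v k) * v 0 := by
  simp [fE2]

lemma g1_formula (v : Fin 8 → ℝ) (hv : v ∈ rootsE8) :
    eval v fE1 + v 1 = 5 * (v 1 * (3 * (v 0 * v 0) + v 1 * v 1 - 1)) := by
  rw [eval_fE1, sos v hv]; ring

lemma g2_formula (v : Fin 8 → ℝ) (hv : v ∈ rootsE8) :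
    eval v fE2 + v 0 = 5 * (v 0 * (3 * (v 1 * v 1) + v 0 * v 0 - 1)) := by
  rw [eval_fE2, sos v hv]; ring

lemma coordfact (v : Fin 8 → ℝ) (hv : v ∈ rootsE8)
    (e1 : v ≠ rr1) (e2 : v ≠ -rr1) (e3 : v ≠ rr2) (e4 : v ≠ -rr2) :
    v 1 * (3 * (v 0 * v 0) + v 1 * v 1 - 1) = 0 ∧
      v 0 * (3 * (v 1 * v 1) + v 0 * v 0 - 1) = 0 := by
  rcases hv with ⟨i, j, hij, hf⟩ | ⟨c, hc, -, rfl⟩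
  · rcases hf with rfl | rfl | rfl | rfl <;>
    · rcases eq_or_ne i 0 with rfl | hi0
      · rcases eq_or_ne j 1 with rfl | hj1
        · first
            | exact absurd rfl e1 | exact absurd rfl e2
            | exact absurd rfl e3 | exact absurd rfl e4
        · have hj0 : j ≠ 0 := hij.ne'
          constructor <;>
            simp [Pi.single_apply, Ne.symm hj1, Ne.symm hj0, ne01, ne10] <;>
            ring
      · have hj0 : j ≠ 0 := by
          rintro rfl
          exact (Fin.not_lt.mpr (Fin.zero_le _)) hij
        have hj1 : j ≠ 1 := by
          rintro rfl
          rw [Fin.lt_def] at hij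
          exact hi0 (Fin.ext (by omega))
        rcases eq_or_ne i 1 with rfl | hi1
        · constructor <;>
            simp [Pi.single_apply, Ne.symm hj1, Ne.symm hj0, ne01, ne10] <;>
            ring
        · constructor <;>
            simp [Pi.single_apply, Ne.symm hj1, Ne.symm hj0, Ne.symm hi1, Ne.symm hi0,
              ne01, ne10] <;>
            ring
  · have e0 : ((1/2:ℝ) • c) 0 * ((1/2:ℝ) • c) 0 = 1/4 := by
      rcases hc 0 with h | h <;> simp [h] <;> norm_num
    have e1 : ((1/2:ℝ) • c) 1 * ((1/2:ℝ) • c) 1 = 1/4 := by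
      rcases hc 1 with h | h <;> simp [h] <;> norm_num
    constructor <;> rw [e0, e1] <;> ring

lemma main_calc (X : Finset (Fin 8 → ℝ)) (f : MvPolynomial (Fin 8) ℝ) (cI : Fin 8)
    (a b : Fin 8 → ℝ) (ha : a ∈ X) (hb : b ∈ X) (hab : a ≠ b)
    (hzero : ∀ v ∈ X, v ≠ a → v ≠ b → eval v f + v cI = 0)
    (hsum : ∑ v ∈ X, v cI = 0) :
    ∑ v ∈ X, eval v f = (eval a f + a cI) + (eval b f + b cI) := by
  classical
  have h1 : ∑ v ∈ X, eval v f = ∑ v ∈ X, (eval v f + v cI) := by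
    rw [Finset.sum_add_distrib, hsum, add_zero]
  have h2 : ∑ v ∈ X, (eval v f + v cI)
      = ∑ v ∈ ({a, b} : Finset (Fin 8 → ℝ)), (eval v f + v cI) := by
    symm
    apply Finset.sum_subset
    · intro v hv
      rcases Finset.mem_insert.mp hv with rfl | hv
      · exact ha
      · rw [Finset.mem_singleton] at hv; subst hv; exact hb
    · intro v hv hvn
      have hva : v ≠ a := fun h => hvn (by rw [h]; exact Finset.mem_insert_self _ _)
      have hvb : v ≠ b := fun h => hvn (by rw [h]; exact Finset.mem_insert_of_mem (Finset.mem_singleton_self _))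
      exact hzero v hv hva hvb
  rw [h1, h2, Finset.sum_pair hab]

/-- For every half `X` of `E_8` (one root per antipodal pair) summing to zero,
there is a homogeneous harmonic polynomial `f` of degree 3 with
`∑_{x ∈ X} f(x) ≠ 0`; i.e., no half of `E_8` summing to zero is a spherical
design of harmonic index `{3}`. -/
theorem stmt_16 (X : Finset (Fin 8 → ℝ))
    (h1 : ∀ v ∈ X, v ∈ rootsE8)
    (h2 : ∀ v ∈ rootsE8, (v ∈ X ↔ -v ∉ X))
    (h3 : ∑ v ∈ X, v = 0) :
    ∃ f : MvPolynomial (Fin 8) ℝ, f.IsHomogeneous 3 ∧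
      (∑ i, MvPolynomial.pderiv i (MvPolynomial.pderiv i f)) = 0 ∧
      ∑ v ∈ X, MvPolynomial.eval v f ≠ 0 := by
  classical
  have hsum : ∀ cI : Fin 8, ∑ v ∈ X, v cI = 0 := by
    intro cI
    have := congrFun h3 cI
    rwa [Finset.sum_apply] at this
  by_cases c1 : rr1 ∈ X
  · have n1 : -rr1 ∉ X := (h2 rr1 rr1_mem).mp c1
    by_cases c2 : rr2 ∈ X
    · -- use fE2, a = rr1, b = rr2, sum = 30
      have n2 : -rr2 ∉ X := (h2 rr2 rr2_mem).mp c2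
      refine ⟨fE2, hom_fE2, harm_fE2, ?_⟩
      have hz : ∀ v ∈ X, v ≠ rr1 → v ≠ rr2 → eval v fE2 + v 0 = 0 := by
        intro v hv hva hvb
        have hr := h1 v hv
        have e2 : v ≠ -rr1 := fun h => n1 (h ▸ hv)
        have e4 : v ≠ -rr2 := fun h => n2 (h ▸ hv)
        rw [g2_formula v hr, (coordfact v hr hva e2 hvb e4).2]; ring
      rw [main_calc X fE2 0 rr1 rr2 c1 c2 rr_ne_1 hz (hsum 0),
        g2_formula rr1 rr1_mem, g2_formula rr2 rr2_mem, rr1_0, rr1_1, rr2_0, rr2_1]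
      norm_num
    · have m2 : -rr2 ∈ X := by
        by_contra hh; exact c2 ((h2 rr2 rr2_mem).mpr hh)
      have n2 : rr2 ∉ X := c2
      -- use fE1, a = rr1, b = -rr2, sum = 30
      refine ⟨fE1, hom_fE1, harm_fE1, ?_⟩
      have hz : ∀ v ∈ X, v ≠ rr1 → v ≠ -rr2 → eval v fE1 + v 1 = 0 := by
        intro v hv hva hvb
        have hr := h1 v hv
        have e2 : v ≠ -rr1 := fun h => n1 (h ▸ hv)
        have e3 : v ≠ rr2 := fun h => n2 (h ▸ hv)
        rw [g1_formula v hr, (coordfact v hr hva e2 e3 hvb).1]; ring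
      rw [main_calc X fE1 1 rr1 (-rr2) c1 m2 rr_ne_2 hz (hsum 1),
        g1_formula rr1 rr1_mem, g1_formula (-rr2) nrr2_mem, rr1_0, rr1_1,
        Pi.neg_apply, Pi.neg_apply, rr2_0, rr2_1]
      norm_num
  · have m1 : -rr1 ∈ X := by
      by_contra hh; exact c1 ((h2 rr1 rr1_mem).mpr hh)
    have n1 : rr1 ∉ X := c1
    by_cases c2 : rr2 ∈ X
    · -- use fE1, a = -rr1, b = rr2, sum = -30
      have n2 : -rr2 ∉ X := (h2 rr2 rr2_mem).mp c2
      refine ⟨fE1, hom_fE1, harm_fE1, ?_⟩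
      have hz : ∀ v ∈ X, v ≠ -rr1 → v ≠ rr2 → eval v fE1 + v 1 = 0 := by
        intro v hv hva hvb
        have hr := h1 v hv
        have e1 : v ≠ rr1 := fun h => n1 (h ▸ hv)
        have e4 : v ≠ -rr2 := fun h => n2 (h ▸ hv)
        rw [g1_formula v hr, (coordfact v hr e1 hva hvb e4).1]; ring
      rw [main_calc X fE1 1 (-rr1) rr2 m1 c2 rr_ne_3 hz (hsum 1),
        g1_formula (-rr1) nrr1_mem, g1_formula rr2 rr2_mem,
        Pi.neg_apply, Pi.neg_apply, rr1_0, rr1_1, rr2_0, rr2_1]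
      norm_num
    · have m2 : -rr2 ∈ X := by
        by_contra hh; exact c2 ((h2 rr2 rr2_mem).mpr hh)
      have n2 : rr2 ∉ X := c2
      -- use fE2, a = -rr1, b = -rr2, sum = -30
      refine ⟨fE2, hom_fE2, harm_fE2, ?_⟩
      have hz : ∀ v ∈ X, v ≠ -rr1 → v ≠ -rr2 → eval v fE2 + v 0 = 0 := by
        intro v hv hva hvb
        have hr := h1 v hv
        have e1 : v ≠ rr1 := fun h => n1 (h ▸ hv)
        have e3 : v ≠ rr2 := fun h => n2 (h ▸ hv)
        rw [g2_formula v hr, (coordfact v hr e1 hva e3 hvb).2]; ring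
      rw [main_calc X fE2 0 (-rr1) (-rr2) m1 m2 rr_ne_4 hz (hsum 0),
        g2_formula (-rr1) nrr1_mem, g2_formula (-rr2) nrr2_mem,
        Pi.neg_apply, Pi.neg_apply, Pi.neg_apply, Pi.neg_apply, rr1_0, rr1_1, rr2_0, rr2_1]
      norm_num
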